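/- arXiv:2412.20362 — 5 statements merged into one kernel-verified Lean document; each statement's English description precedes it below -/
import Mathlib

section
/- The space X = {x : (−∞, t0+σ] → ℝ^n : x_{t0} ∈ 𝓑 and x|_{[t0, t0+σ]} is regulated}, equipped with the norm ‖x‖_X = ‖x_{t0}‖_𝓑 + sup_{u ∈ [t0, t0+σ]}‖x(u)‖, is a Banach space. -/
open MeasureTheory Filter Set

noncomputable section

/-- `ℝ^n`. -/
abbrev Eu (n : ℕ) := EuclideanSpace ℝ (Fin n)

/-- The history (segment) of `y` at time `t`: `(history y t) θ = y (t + θ)`. -/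
def history {E : Type*} (y : ℝ → E) (t : ℝ) : ℝ → E := fun θ => y (t + θ)

/-- `f` is regulated on the interval `[a, b]`: it has a left limit (within the
interval) at every point of `(a, b]` and a right limit at every point of `[a, b)`. -/
def RegulatedOnIcc {E : Type*} [TopologicalSpace E] (f : ℝ → E) (a b : ℝ) : Prop :=
  (∀ t ∈ Set.Ioc a b, ∃ l : E, Filter.Tendsto f (nhdsWithin t (Set.Ico a t)) (nhds l)) ∧
  (∀ t ∈ Set.Ico a b, ∃ l : E, Filter.Tendsto f (nhdsWithin t (Set.Ioc t b)) (nhds l))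

/-- `f` is regulated on `(-∞, 0]`: it has a left limit at every point `t ≤ 0` and
a right limit at every point `t < 0`. -/
def RegulatedOnIic0 {E : Type*} [TopologicalSpace E] (f : ℝ → E) : Prop :=
  (∀ t ≤ (0:ℝ), ∃ l : E, Filter.Tendsto f (nhdsWithin t (Set.Iio t)) (nhds l)) ∧
  (∀ t < (0:ℝ), ∃ l : E, Filter.Tendsto f (nhdsWithin t (Set.Ioo t 0)) (nhds l))

/-- A phase space: a Banach space `𝓑` of regulated functions `(-∞,0] → E`
(modelled as functions `ℝ → E` whose membership and norm only depend on the
restriction to `(-∞,0]`), satisfying axioms (A1) (completeness), (A2) and (A3). -/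
structure PhaseSpace (E : Type*) [NormedAddCommGroup E] [NormedSpace ℝ E] where
  /-- membership in `𝓑` -/
  mem : (ℝ → E) → Prop
  /-- the norm `‖·‖_𝓑` -/
  nrm : (ℝ → E) → ℝ
  regulated' : ∀ φ, mem φ → RegulatedOnIic0 φ
  zero_mem : mem 0
  add_mem : ∀ φ ψ, mem φ → mem ψ → mem (φ + ψ)
  smul_mem : ∀ (c : ℝ) (φ), mem φ → mem (c • φ)
  mem_congr : ∀ φ ψ, mem φ → Set.EqOn φ ψ (Set.Iic 0) → mem ψ
  nrm_congr : ∀ φ ψ, Set.EqOn φ ψ (Set.Iic 0) → nrm φ = nrm ψ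
  nrm_nonneg : ∀ φ, 0 ≤ nrm φ
  nrm_eq_zero : ∀ φ, mem φ → nrm φ = 0 → ∀ θ ≤ (0:ℝ), φ θ = 0
  nrm_add_le : ∀ φ ψ, nrm (φ + ψ) ≤ nrm φ + nrm ψ
  nrm_smul : ∀ (c : ℝ) (φ), nrm (c • φ) = |c| * nrm φ
  /-- (A1): completeness of `𝓑`. -/
  complete' : ∀ u : ℕ → (ℝ → E), (∀ k, mem (u k)) →
    (∀ ε > (0:ℝ), ∃ N, ∀ m ≥ N, ∀ k ≥ N, nrm (u m - u k) < ε) →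
    ∃ φ, mem φ ∧ Filter.Tendsto (fun k => nrm (u k - φ)) Filter.atTop (nhds 0)
  /-- the function `k₁` of axiom (A2) -/
  k1 : ℝ → ℝ
  /-- the function `k₂` of axiom (A2) -/
  k2 : ℝ → ℝ
  /-- the function `k₃` of axiom (A2) -/
  k3 : ℝ → ℝ
  k1_pos : ∀ t, 0 ≤ t → 0 < k1 t
  k2_pos : ∀ t, 0 ≤ t → 0 < k2 t
  k3_pos : ∀ t, 0 ≤ t → 0 < k3 t
  k1_locBdd : ∀ r, 0 ≤ r → BddAbove (k1 '' Set.Icc 0 r)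
  k2_locBdd : ∀ r, 0 ≤ r → BddAbove (k2 '' Set.Icc 0 r)
  k3_locBdd : ∀ r, 0 ≤ r → BddAbove (k3 '' Set.Icc 0 r)
  /-- Axiom (A2). -/
  axiomA2 : ∀ (t0 σ : ℝ), 0 < σ → ∀ y : ℝ → E,
    RegulatedOnIcc y t0 (t0 + σ) → mem (history y t0) →
    ∀ t ∈ Set.Icc t0 (t0 + σ),
      mem (history y t) ∧
      ‖y t‖ ≤ k1 (t - t0) * nrm (history y t) ∧
      nrm (history y t) ≤ k2 (t - t0) * nrm (history y t0) +
        k3 (t - t0) * sSup ((fun u => ‖y u‖) '' Set.Icc t0 t)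
  /-- the function `k` of axiom (A3) -/
  k0 : ℝ → ℝ
  k0_cont : Continuous k0
  k0_zero : k0 0 = 0
  /-- Axiom (A3): for `t ≥ 0`, any function `ψ` built from `φ ∈ 𝓑` as
  `ψ 0 = φ 0`, `ψ θ = φ(0⁻)` for `-t ≤ θ < 0` and `ψ θ = φ (t + θ)` for `θ < -t`
  belongs to `𝓑` with `‖ψ‖_𝓑 ≤ (1 + k t) ‖φ‖_𝓑`. -/
  axiomA3 : ∀ t, 0 ≤ t → ∀ φ : ℝ → E, mem φ → ∀ φ0 : E,
    Filter.Tendsto φ (nhdsWithin 0 (Set.Iio 0)) (nhds φ0) →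
    ∀ ψ : ℝ → E, ψ 0 = φ 0 → (∀ θ, -t ≤ θ → θ < 0 → ψ θ = φ0) →
    (∀ θ, θ < -t → ψ θ = φ (t + θ)) →
    mem ψ ∧ nrm ψ ≤ (1 + k0 t) * nrm φ

/-- Membership in the space `X` of functions `(-∞, t0+σ] → E` with `x_{t0} ∈ 𝓑`
and `x` regulated on `[t0, t0+σ]`. -/
def memX {E : Type*} [NormedAddCommGroup E] [NormedSpace ℝ E]
    (P : PhaseSpace E) (t0 σ : ℝ) (x : ℝ → E) : Prop :=
  P.mem (history x t0) ∧ RegulatedOnIcc x t0 (t0 + σ)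

/-- The norm `‖x‖_X = ‖x_{t0}‖_𝓑 + sup_{u ∈ [t0, t0+σ]} ‖x u‖`. -/
def normX {E : Type*} [NormedAddCommGroup E] [NormedSpace ℝ E]
    (P : PhaseSpace E) (t0 σ : ℝ) (x : ℝ → E) : ℝ :=
  P.nrm (history x t0) + sSup ((fun u => ‖x u‖) '' Set.Icc t0 (t0 + σ))

/-
The linear structure and the norm axioms come from those of `𝓑` and of the sup norm on
`[t0, t0 + σ]`; the latter is finite because a regulated function is locally bounded at every
point of the compact interval. For completeness, a Cauchy sequence `u` in `X` has histories
`(u k)_{t0}` converging in `𝓑` to some `φ` by (A1), and is uniformly Cauchy on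
`[t0, t0 + σ]`, hence converges uniformly there to some `g`, which is again regulated
(Moore–Osgood). Axiom (A2) at `t = t0` bounds `‖ψ 0‖` by `k₁(0) ‖ψ‖_𝓑`, so `g t0 = φ 0`,
and `φ` and `g` glue to the limit of `u` in `X`.
-/

open Topology Pointwise

section Regulated

variable {E : Type*} [TopologicalSpace E] {a b : ℝ}

theorem RegulatedOnIcc.comp₂ {F G : Type*} [TopologicalSpace F] [TopologicalSpace G]
    {f : ℝ → E} {g : ℝ → F} {φ : E → F → G} (hφ : Continuous fun p : E × F => φ p.1 p.2)
    (hf : RegulatedOnIcc f a b) (hg : RegulatedOnIcc g a b) :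
    RegulatedOnIcc (fun t => φ (f t) (g t)) a b := by
  constructor
  · intro t ht
    obtain ⟨l, hl⟩ := hf.1 t ht
    obtain ⟨l', hl'⟩ := hg.1 t ht
    exact ⟨φ l l', (hφ.tendsto (l, l')).comp (hl.prodMk_nhds hl')⟩
  · intro t ht
    obtain ⟨l, hl⟩ := hf.2 t ht
    obtain ⟨l', hl'⟩ := hg.2 t ht
    exact ⟨φ l l', (hφ.tendsto (l, l')).comp (hl.prodMk_nhds hl')⟩

theorem RegulatedOnIcc.comp {F : Type*} [TopologicalSpace F] {f : ℝ → E} {φ : E → F}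
    (hφ : Continuous φ) (hf : RegulatedOnIcc f a b) : RegulatedOnIcc (φ ∘ f) a b :=
  hf.comp₂ (φ := fun x _ => φ x) (hφ.comp continuous_fst) hf

theorem RegulatedOnIcc.congr {f g : ℝ → E} (hf : RegulatedOnIcc f a b) (h : EqOn f g (Icc a b)) :
    RegulatedOnIcc g a b := by
  constructor
  · intro t ht
    obtain ⟨l, hl⟩ := hf.1 t ht
    exact ⟨l, hl.congr' (eventually_nhdsWithin_of_forall fun s hs =>
      h ⟨hs.1, hs.2.le.trans ht.2⟩)⟩
  · intro t ht
    obtain ⟨l, hl⟩ := hf.2 t ht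
    exact ⟨l, hl.congr' (eventually_nhdsWithin_of_forall fun s hs =>
      h ⟨ht.1.trans hs.1.le, hs.2⟩)⟩

theorem RegulatedOnIcc.const (c : E) : RegulatedOnIcc (fun _ => c) a b :=
  ⟨fun _ _ => ⟨c, tendsto_const_nhds⟩, fun _ _ => ⟨c, tendsto_const_nhds⟩⟩

theorem RegulatedOnIcc.add [Add E] [ContinuousAdd E] {f g : ℝ → E}
    (hf : RegulatedOnIcc f a b) (hg : RegulatedOnIcc g a b) : RegulatedOnIcc (f + g) a b :=
  hf.comp₂ (φ := (· + ·)) continuous_add hg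

theorem RegulatedOnIcc.sub [Sub E] [ContinuousSub E] {f g : ℝ → E}
    (hf : RegulatedOnIcc f a b) (hg : RegulatedOnIcc g a b) : RegulatedOnIcc (f - g) a b :=
  hf.comp₂ (φ := (· - ·)) continuous_sub hg

theorem RegulatedOnIcc.const_smul [SMul ℝ E] [ContinuousConstSMul ℝ E] {f : ℝ → E} (c : ℝ)
    (hf : RegulatedOnIcc f a b) : RegulatedOnIcc (c • f) a b :=
  hf.comp (φ := (c • ·)) (continuous_const_smul c)

end Regulated

section Bounded

variable {E : Type*} [SeminormedAddCommGroup E] {f : ℝ → E} {a b : ℝ}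

theorem RegulatedOnIcc.isBoundedUnder_norm (hf : RegulatedOnIcc f a b) {t : ℝ}
    (ht : t ∈ Icc a b) : (𝓝[Icc a b] t).IsBoundedUnder (· ≤ ·) (‖f ·‖) := by
  have left : (𝓝[Ico a t] t).IsBoundedUnder (· ≤ ·) (‖f ·‖) := by
    rcases ht.1.eq_or_lt with rfl | hat
    · exact isBoundedUnder_of_eventually_le (a := 0) (by simp)
    · obtain ⟨l, hl⟩ := hf.1 t ⟨hat, ht.2⟩
      exact hl.norm.isBoundedUnder_le
  have right : (𝓝[Ioc t b] t).IsBoundedUnder (· ≤ ·) (‖f ·‖) := by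
    rcases ht.2.eq_or_lt with rfl | htb
    · exact isBoundedUnder_of_eventually_le (a := 0) (by simp)
    · obtain ⟨l, hl⟩ := hf.2 t ⟨ht.1, htb⟩
      exact hl.norm.isBoundedUnder_le
  have at_t : (pure t : Filter ℝ).IsBoundedUnder (· ≤ ·) (‖f ·‖) :=
    (tendsto_pure_nhds _ t).norm.isBoundedUnder_le
  rw [← Ico_union_Icc_eq_Icc ht.1 ht.2, ← Ioc_insert_left ht.2, nhdsWithin_union,
    nhdsWithin_insert]
  simpa only [IsBoundedUnder, Filter.map_sup] using isBounded_sup left (isBounded_sup at_t right)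

theorem RegulatedOnIcc.bddAbove_norm (hf : RegulatedOnIcc f a b) :
    BddAbove ((‖f ·‖) '' Icc a b) := by
  refine isCompact_Icc.induction_on (p := fun s => BddAbove ((‖f ·‖) '' s)) (by simp)
    (fun s t hst ht => ht.mono (image_mono hst))
    (fun s t hs ht => by simpa only [image_union] using hs.union ht) fun t ht => ?_
  obtain ⟨s, hs, hts⟩ := isBoundedUnder_iff_eventually_bddAbove.1 (hf.isBoundedUnder_norm ht)
  exact ⟨s, hts, hs⟩

end Bounded

section UniformLimit

variable {ι α β : Type*} [UniformSpace β] [CompleteSpace β]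

theorem TendstoUniformlyOnFilter.exists_tendsto {F : ι → α → β} {f : α → β} {p : Filter ι}
    [p.NeBot] {l : Filter α} (hF : TendstoUniformlyOnFilter F f p l)
    (hlim : ∀ i, ∃ L, Tendsto (F i) l (𝓝 L)) : ∃ ℓ, Tendsto f l (𝓝 ℓ) := by
  rcases l.eq_or_neBot with rfl | hl
  · obtain ⟨i⟩ := p.nonempty_of_neBot
    exact ⟨(hlim i).choose, tendsto_bot⟩
  rw [← cauchy_map_iff_exists_tendsto, cauchy_map_iff]
  refine ⟨hl, fun U hU => mem_map.2 ?_⟩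
  obtain ⟨t, ht, htU⟩ := comp3_mem_uniformity hU
  obtain ⟨i, hi⟩ := ((hF t ht).and (hF _ (symm_le_uniformity ht))).curry.exists
  obtain ⟨L, hL⟩ := hlim i
  filter_upwards [(cauchy_map_iff.1 hL.cauchy_map).2 ht, hi.prod_inl l, hi.prod_inr l]
    with q hq h₁ h₂
  exact htU ⟨F i q.1, h₁.1, F i q.2, hq, h₂.2⟩

theorem UniformCauchySeqOn.exists_tendstoUniformlyOn [Nonempty ι] [SemilatticeSup ι] [Nonempty β]
    {F : ι → α → β} {s : Set α} (hF : UniformCauchySeqOn F atTop s) :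
    ∃ f, TendstoUniformlyOn F f atTop s :=
  ⟨fun x => limUnder atTop (F · x),
    hF.tendstoUniformlyOn_of_tendsto fun _ hx => (hF.cauchySeq hx).tendsto_limUnder⟩

theorem RegulatedOnIcc.of_tendstoUniformlyOn {F : ι → ℝ → β} {f : ℝ → β} {p : Filter ι}
    [p.NeBot] {a b : ℝ} (hF : ∀ i, RegulatedOnIcc (F i) a b)
    (h : TendstoUniformlyOn F f p (Icc a b)) : RegulatedOnIcc f a b := by
  have within : ∀ s ⊆ Icc a b, ∀ t, (∀ i, ∃ L, Tendsto (F i) (𝓝[s] t) (𝓝 L)) →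
      ∃ ℓ, Tendsto f (𝓝[s] t) (𝓝 ℓ) := fun s hs _ =>
    ((h.mono hs).tendstoUniformlyOnFilter.mono_right inf_le_right).exists_tendsto
  exact ⟨fun t ht => within _ (Ico_subset_Icc_self.trans (Icc_subset_Icc_right ht.2)) t
      fun i => (hF i).1 t ht,
    fun t ht => within _ (Ioc_subset_Icc_self.trans (Icc_subset_Icc_left ht.1)) t
      fun i => (hF i).2 t ht⟩

end UniformLimit

section SupNorm

variable {ι α E : Type*} [SeminormedAddCommGroup E] {s : Set α}

theorem sSup_image_norm_nonneg (f : α → E) (s : Set α) : 0 ≤ sSup ((‖f ·‖) '' s) :=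
  Real.sSup_nonneg (by rintro _ ⟨x, -, rfl⟩; exact norm_nonneg _)

theorem sSup_image_norm_add_le {f g : α → E} (hf : BddAbove ((‖f ·‖) '' s))
    (hg : BddAbove ((‖g ·‖) '' s)) :
    sSup ((‖(f + g) ·‖) '' s) ≤ sSup ((‖f ·‖) '' s) + sSup ((‖g ·‖) '' s) :=
  Real.sSup_le (by
      rintro _ ⟨x, hx, rfl⟩
      exact (norm_add_le _ _).trans
        (add_le_add (le_csSup hf ⟨x, hx, rfl⟩) (le_csSup hg ⟨x, hx, rfl⟩)))
    (add_nonneg (sSup_image_norm_nonneg f s) (sSup_image_norm_nonneg g s))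

theorem sSup_image_norm_smul [NormedSpace ℝ E] (c : ℝ) (f : α → E) (s : Set α) :
    sSup ((‖(c • f) ·‖) '' s) = |c| * sSup ((‖f ·‖) '' s) := by
  have : (‖(c • f) ·‖) '' s = |c| • (‖f ·‖) '' s := by
    simp only [Pi.smul_apply, norm_smul, Real.norm_eq_abs, ← smul_eq_mul, ← image_smul,
      image_image]
  rw [this, Real.sSup_smul_of_nonneg (abs_nonneg c), smul_eq_mul]

theorem TendstoUniformlyOn.tendsto_sSup_image_norm_sub {F : ι → α → E} {f : α → E}
    {p : Filter ι} (h : TendstoUniformlyOn F f p s) :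
    Tendsto (fun i => sSup ((‖(F i - f) ·‖) '' s)) p (𝓝 0) := by
  rw [Metric.tendsto_nhds]
  intro ε hε
  filter_upwards [Metric.tendstoUniformlyOn_iff.1 h (ε / 2) (half_pos hε)] with i hi
  have hle : sSup ((‖(F i - f) ·‖) '' s) ≤ ε / 2 := Real.sSup_le (by
      rintro _ ⟨x, hx, rfl⟩
      show ‖F i x - f x‖ ≤ _
      rw [← dist_eq_norm, dist_comm]
      exact (hi x hx).le) (half_pos hε).le
  rw [Real.dist_0_eq_abs, abs_of_nonneg (sSup_image_norm_nonneg _ s)]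
  linarith

end SupNorm

namespace PhaseSpace

variable {ι E : Type*} [NormedAddCommGroup E] [NormedSpace ℝ E] (P : PhaseSpace E)

theorem sub_mem {φ ψ : ℝ → E} (hφ : P.mem φ) (hψ : P.mem ψ) : P.mem (φ - ψ) := by
  simpa [sub_eq_add_neg] using P.add_mem _ _ hφ (P.smul_mem (-1) ψ hψ)

theorem norm_apply_zero_le {ψ : ℝ → E} (hψ : P.mem ψ) : ‖ψ 0‖ ≤ P.k1 0 * P.nrm ψ := by
  set y : ℝ → E := fun t => ψ (min t 0)
  have hy : EqOn ψ (history y 0) (Iic 0) := fun θ hθ => by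
    simp [y, history, min_eq_left (mem_Iic.1 hθ)]
  have hreg : RegulatedOnIcc y 0 (0 + 1) :=
    (RegulatedOnIcc.const (ψ 0)).congr fun t ht => by simp [y, min_eq_right ht.1]
  obtain ⟨-, h, -⟩ := P.axiomA2 0 1 one_pos y hreg (P.mem_congr ψ _ hψ hy) 0 (by simp)
  simpa [← P.nrm_congr ψ _ hy, y] using h

theorem tendsto_apply_zero {p : Filter ι} {u : ι → ℝ → E} {φ : ℝ → E} (hu : ∀ i, P.mem (u i))
    (hφ : P.mem φ) (h : Tendsto (fun i => P.nrm (u i - φ)) p (𝓝 0)) :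
    Tendsto (fun i => u i 0) p (𝓝 (φ 0)) :=
  tendsto_iff_norm_sub_tendsto_zero.2 <| squeeze_zero (fun _ => norm_nonneg _)
    (fun i => P.norm_apply_zero_le (P.sub_mem (hu i) hφ)) (by simpa using h.const_mul (P.k1 0))

end PhaseSpace

section SpaceX

variable {E : Type*} [NormedAddCommGroup E] [NormedSpace ℝ E] (P : PhaseSpace E) {t0 σ : ℝ}
  {x y : ℝ → E}

theorem memX_zero : memX P t0 σ 0 :=
  ⟨P.zero_mem, RegulatedOnIcc.const 0⟩

variable {P}

theorem memX.add (hx : memX P t0 σ x) (hy : memX P t0 σ y) : memX P t0 σ (x + y) :=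
  ⟨P.add_mem _ _ hx.1 hy.1, hx.2.add hy.2⟩

theorem memX.const_smul (c : ℝ) (hx : memX P t0 σ x) : memX P t0 σ (c • x) :=
  ⟨P.smul_mem c _ hx.1, hx.2.const_smul c⟩

variable (P) in
theorem normX_nonneg (x : ℝ → E) : 0 ≤ normX P t0 σ x :=
  add_nonneg (P.nrm_nonneg _) (sSup_image_norm_nonneg _ _)

theorem normX_add_le (hx : memX P t0 σ x) (hy : memX P t0 σ y) :
    normX P t0 σ (x + y) ≤ normX P t0 σ x + normX P t0 σ y :=
  (add_le_add (P.nrm_add_le _ _) (sSup_image_norm_add_le hx.2.bddAbove_norm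
    hy.2.bddAbove_norm)).trans_eq (add_add_add_comm _ _ _ _)

variable (P) in
theorem normX_smul (c : ℝ) (x : ℝ → E) : normX P t0 σ (c • x) = |c| * normX P t0 σ x := by
  rw [normX, normX, mul_add, ← P.nrm_smul, ← sSup_image_norm_smul]
  rfl

variable (P) in
theorem nrm_history_le_normX (x : ℝ → E) : P.nrm (history x t0) ≤ normX P t0 σ x :=
  le_add_of_nonneg_right (sSup_image_norm_nonneg _ _)

theorem norm_le_normX (hx : RegulatedOnIcc x t0 (t0 + σ)) {s : ℝ} (hs : s ∈ Icc t0 (t0 + σ)) :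
    ‖x s‖ ≤ normX P t0 σ x :=
  (le_csSup hx.bddAbove_norm ⟨s, hs, rfl⟩).trans (le_add_of_nonneg_left (P.nrm_nonneg _))

theorem eq_zero_of_normX_eq_zero (hx : memX P t0 σ x) (h0 : normX P t0 σ x = 0) {t : ℝ}
    (ht : t ≤ t0 + σ) : x t = 0 := by
  rcases le_or_gt t t0 with htt0 | htt0
  · have hnrm : P.nrm (history x t0) = 0 :=
      le_antisymm (h0 ▸ nrm_history_le_normX P x) (P.nrm_nonneg _)
    simpa [history] using P.nrm_eq_zero _ hx.1 hnrm (t - t0) (by linarith)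
  · exact norm_le_zero_iff.1 (h0 ▸ norm_le_normX hx.2 ⟨htt0.le, ht⟩)

theorem memX_complete [CompleteSpace E] (hσ : 0 ≤ σ) {u : ℕ → ℝ → E}
    (hu : ∀ k, memX P t0 σ (u k))
    (hcauchy : ∀ ε > (0 : ℝ), ∃ N, ∀ m ≥ N, ∀ k ≥ N, normX P t0 σ (u m - u k) < ε) :
    ∃ x, memX P t0 σ x ∧ Tendsto (fun k => normX P t0 σ (u k - x)) atTop (𝓝 0) := by
  obtain ⟨φ, hφ, hlimφ⟩ := P.complete' (fun k => history (u k) t0) (fun k => (hu k).1)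
    fun ε hε => (hcauchy ε hε).imp fun N hN m hm k hk =>
      (nrm_history_le_normX P _).trans_lt (hN m hm k hk)
  have hunif : UniformCauchySeqOn u atTop (Icc t0 (t0 + σ)) :=
    Metric.uniformCauchySeqOn_iff.2 fun ε hε => (hcauchy ε hε).imp fun N hN m hm k hk s hs =>
      (dist_eq_norm (u m s) (u k s) ▸ norm_le_normX ((hu m).2.sub (hu k).2) hs).trans_lt
        (hN m hm k hk)
  obtain ⟨g, hg⟩ := hunif.exists_tendstoUniformlyOn
  have hgt0 : g t0 = φ 0 := tendsto_nhds_unique (hg.tendsto_at ⟨le_rfl, by linarith⟩) <| by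
    simpa [history] using P.tendsto_apply_zero (fun k => (hu k).1) hφ hlimφ
  set x : ℝ → E := fun s => if s < t0 then φ (s - t0) else g s
  have hx_hist : EqOn φ (history x t0) (Iic 0) := fun θ hθ => by
    rcases (mem_Iic.1 hθ).lt_or_eq with hθ | rfl
    · simp [x, history, hθ]
    · simp [x, history, hgt0]
  have hux : TendstoUniformlyOn u x atTop (Icc t0 (t0 + σ)) :=
    hg.congr_right fun s hs => by simp [x, not_lt.2 hs.1]
  refine ⟨x, ⟨P.mem_congr φ _ hφ hx_hist,
    RegulatedOnIcc.of_tendstoUniformlyOn (fun k => (hu k).2) hux⟩, ?_⟩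
  have hnrm : ∀ k, P.nrm (history (u k) t0 - φ) = P.nrm (history (u k - x) t0) := fun k =>
    P.nrm_congr _ _ fun θ hθ => congrArg (u k (t0 + θ) - ·) (hx_hist hθ)
  simpa only [normX, add_zero] using (hlimφ.congr hnrm).add hux.tendsto_sSup_image_norm_sub

end SpaceX

/-- the space `X` with the norm
`‖x‖_X = ‖x_{t0}‖_𝓑 + sup_{u ∈ [t0,t0+σ]} ‖x u‖` is a Banach space: it is a
vector subspace, `normX` is a norm on it, and it is complete. -/
theorem X_is_Banach (n : ℕ) (t0 σ : ℝ) (hσ : 0 < σ) (P : PhaseSpace (Eu n)) :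
    -- `X` is a vector subspace
    memX P t0 σ 0 ∧
    (∀ x y : ℝ → Eu n, memX P t0 σ x → memX P t0 σ y → memX P t0 σ (x + y)) ∧
    (∀ (c : ℝ) (x : ℝ → Eu n), memX P t0 σ x → memX P t0 σ (c • x)) ∧
    -- `normX` is a norm on `X`
    (∀ x : ℝ → Eu n, memX P t0 σ x → 0 ≤ normX P t0 σ x) ∧
    (∀ x y : ℝ → Eu n, memX P t0 σ x → memX P t0 σ y →
      normX P t0 σ (x + y) ≤ normX P t0 σ x + normX P t0 σ y) ∧
    (∀ (c : ℝ) (x : ℝ → Eu n), memX P t0 σ x →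
      normX P t0 σ (c • x) = |c| * normX P t0 σ x) ∧
    (∀ x : ℝ → Eu n, memX P t0 σ x → normX P t0 σ x = 0 → ∀ t ≤ t0 + σ, x t = 0) ∧
    -- `X` is complete
    (∀ u : ℕ → ℝ → Eu n, (∀ k, memX P t0 σ (u k)) →
      (∀ ε > (0:ℝ), ∃ N : ℕ, ∀ m ≥ N, ∀ k ≥ N, normX P t0 σ (u m - u k) < ε) →
      ∃ x : ℝ → Eu n, memX P t0 σ x ∧
        Filter.Tendsto (fun k => normX P t0 σ (u k - x)) Filter.atTop (nhds 0)) := by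
  exact ⟨memX_zero P, fun _ _ => memX.add, fun c _ => memX.const_smul c,
    fun x _ => normX_nonneg P x, fun _ _ => normX_add_le, fun c x _ => normX_smul P c x,
    fun _ => eq_zero_of_normX_eq_zero, fun _ => memX_complete hσ.le⟩
end
end

section
/- Let ε ∈ (0, ε0], let y : (−∞, L/ε] → ℝ^n satisfy y_0 ∈ 𝓑 and y regulated on [0, L/ε], let t ∈ [0, L/ε], and let p be the largest integer with pT ≤ t. Then ∑_{i=1}^{p} ‖∫_{(i−1)T}^{iT} (f(s, y_{ρ(s, y_s, ε)}) − f(s, y_{ρ(s, y_{(i−1)T}, ε)})) dh(s)‖ ≤ C2·C3·α·L. -/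
open MeasureTheory Filter Set

noncomputable section

/-!
On the `i`-th period `[iT, (i+1)T)` the two delayed arguments differ, by the Lipschitz bound
(C8) on `ρ`, by at most `ε C3 |s - iT| ≤ ε C3 T`, so by (C6') the integrand has norm at most
`C2 ε C3 T`. A period has `μ_h`-measure `α`, so each term is at most `C2 C3 α (εT)`, and the
`p` terms sum to at most `C2 C3 α (ε p T) ≤ C2 C3 α L` because `pT ≤ t ≤ L/ε`.
-/

theorem measure_Ico_add_period {μ : Measure ℝ} {h : ℝ → ℝ} {T α a : ℝ}
    (hμ : ∀ u v : ℝ, 0 ≤ u → u ≤ v → μ (Ico u v) = ENNReal.ofReal (h v - h u))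
    (hper : ∀ t, 0 ≤ t → h (t + T) - h t = α) (ha : 0 ≤ a) (hT : 0 ≤ T) :
    μ (Ico a (a + T)) = ENNReal.ofReal α := by
  rw [hμ a (a + T) ha (by linarith), hper a ha]

theorem norm_setIntegral_le_mul_of_measure_eq {E : Type*} [NormedAddCommGroup E]
    [NormedSpace ℝ E] {μ : Measure ℝ} {S : Set ℝ} {F : ℝ → E} {C m : ℝ}
    (hS : μ S = ENNReal.ofReal m) (hm : 0 ≤ m) (hF : ∀ x ∈ S, ‖F x‖ ≤ C) :
    ‖∫ x in S, F x ∂μ‖ ≤ C * m := by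
  have := norm_setIntegral_le_of_norm_le_const (hS ▸ ENNReal.ofReal_lt_top) hF
  rwa [measureReal_def, hS, ENNReal.toReal_ofReal hm] at this

section DelayedIntegrand

variable {X E : Type*} [NormedAddCommGroup E]
  {φ : ℝ → X} {f : ℝ → X → E} {ρ : ℝ → X → ℝ} {B C K : ℝ}

theorem norm_sub_comp_delay_le (hC : 0 ≤ C)
    (hf : ∀ s, 0 ≤ s → ∀ a ∈ Icc 0 B, ∀ b ∈ Icc 0 B,
      ‖f s (φ a) - f s (φ b)‖ ≤ C * |a - b|)
    (hρ : ∀ s, 0 ≤ s → ∀ a ∈ Icc 0 B, ∀ b ∈ Icc 0 B,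
      |ρ s (φ a) - ρ s (φ b)| ≤ K * |a - b|)
    (hρmem : ∀ s ∈ Icc 0 B, ∀ u ∈ Icc 0 B, ρ s (φ u) ∈ Icc 0 B)
    {s u : ℝ} (hs : s ∈ Icc 0 B) (hu : u ∈ Icc 0 B) :
    ‖f s (φ (ρ s (φ s))) - f s (φ (ρ s (φ u)))‖ ≤ C * (K * |s - u|) :=
  calc ‖f s (φ (ρ s (φ s))) - f s (φ (ρ s (φ u)))‖
      ≤ C * |ρ s (φ s) - ρ s (φ u)| := hf s hs.1 _ (hρmem s hs s hs) _ (hρmem s hs u hu)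
    _ ≤ C * (K * |s - u|) := mul_le_mul_of_nonneg_left (hρ s hs.1 s hs u hu) hC

theorem norm_setIntegral_Ico_delay_sub_le [NormedSpace ℝ E] {μ : Measure ℝ} {T α c : ℝ}
    (hC : 0 ≤ C) (hK : 0 ≤ K) (hT : 0 ≤ T) (hα : 0 ≤ α)
    (hf : ∀ s, 0 ≤ s → ∀ a ∈ Icc 0 B, ∀ b ∈ Icc 0 B,
      ‖f s (φ a) - f s (φ b)‖ ≤ C * |a - b|)
    (hρ : ∀ s, 0 ≤ s → ∀ a ∈ Icc 0 B, ∀ b ∈ Icc 0 B,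
      |ρ s (φ a) - ρ s (φ b)| ≤ K * |a - b|)
    (hρmem : ∀ s ∈ Icc 0 B, ∀ u ∈ Icc 0 B, ρ s (φ u) ∈ Icc 0 B)
    (hc : 0 ≤ c) (hcB : c + T ≤ B) (hμc : μ (Ico c (c + T)) = ENNReal.ofReal α) :
    ‖∫ s in Ico c (c + T), (f s (φ (ρ s (φ s))) - f s (φ (ρ s (φ c)))) ∂μ‖ ≤
      C * (K * T) * α := by
  refine norm_setIntegral_le_mul_of_measure_eq hμc hα fun s hs => ?_
  have hsc : |s - c| ≤ T := by
    rw [abs_of_nonneg (by linarith [hs.1])]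
    linarith [hs.2]
  calc ‖f s (φ (ρ s (φ s))) - f s (φ (ρ s (φ c)))‖
      ≤ C * (K * |s - c|) :=
        norm_sub_comp_delay_le hC hf hρ hρmem ⟨hc.trans hs.1, by linarith [hs.2]⟩
          ⟨hc, by linarith⟩
    _ ≤ C * (K * T) := by gcongr

end DelayedIntegrand

theorem averaging_estimate_one_general
    (n : ℕ) (ε0 L T α : ℝ)
    (hL : 0 < L) (hT : 0 < T) (hα : 0 < α)
    -- the Banach space `𝓑` of regulated functions on `(-∞, 0]`
    (Bmem : (ℝ → Eu n) → Prop)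
    -- the left-continuous nondecreasing function `h` with `h(t+T) - h(t) = α`
    (h : ℝ → ℝ)
    (hper : ∀ t, 0 ≤ t → h (t + T) - h t = α)
    (μ : Measure ℝ)
    (hμ : ∀ a b : ℝ, 0 ≤ a → a ≤ b → μ (Set.Ico a b) = ENNReal.ofReal (h b - h a))
    (f : ℝ → (ℝ → Eu n) → Eu n)
    -- the delay functional `ρ`
    (ρ : ℝ → (ℝ → Eu n) → ℝ → ℝ)
    (hρnn : ∀ t, 0 ≤ t → ∀ (x : ℝ → Eu n) (e : ℝ), 0 ≤ ρ t x e)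
    -- (C7)
    (hC7 : ∀ e ∈ Set.Ioc (0:ℝ) ε0, ∀ t, 0 ≤ t → ∀ x : ℝ → Eu n, Bmem x →
      ρ t x e ≤ t)
    -- (C6')
    (C2 : ℝ) (hC2 : 0 < C2)
    (hC6 : ∀ b' : ℝ, 0 < b' → ∀ x : ℝ → Eu n, Bmem (history x 0) →
      RegulatedOnIcc x 0 b' → ∀ s, 0 ≤ s →
      ∀ a ∈ Set.Icc (0:ℝ) b', ∀ b ∈ Set.Icc (0:ℝ) b',
      ‖f s (history x a) - f s (history x b)‖ ≤ C2 * |a - b|)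
    -- (C8)
    (C3 : ℝ) (hC3 : 0 < C3)
    (hC8 : ∀ e ∈ Set.Ioc (0:ℝ) ε0, ∀ b' : ℝ, 0 < b' → ∀ x : ℝ → Eu n,
      Bmem (history x 0) → RegulatedOnIcc x 0 b' →
      ∀ t, 0 ≤ t → ∀ a ∈ Set.Icc (0:ℝ) b', ∀ b ∈ Set.Icc (0:ℝ) b',
      |ρ t (history x a) e - ρ t (history x b) e| ≤ e * C3 * |a - b|)
    -- the fixed `ε` and the function `y`
    (ε : ℝ) (hε : ε ∈ Set.Ioc (0:ℝ) ε0)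
    (y : ℝ → Eu n) (hy0 : Bmem (history y 0))
    (hyreg : RegulatedOnIcc y 0 (L / ε))
    (hyhist : ∀ u ∈ Set.Icc (0:ℝ) (L / ε), Bmem (history y u))
    -- `t` and the largest integer `p` with `pT ≤ t`
    (t : ℝ) (ht : t ∈ Set.Icc (0:ℝ) (L / ε))
    (p : ℕ) (hp1 : (p : ℝ) * T ≤ t) :
    ∑ i ∈ Finset.range p,
      ‖∫ s in Set.Ico ((i : ℝ) * T) (((i : ℝ) + 1) * T),
        (f s (history y (ρ s (history y s) ε)) -
          f s (history y (ρ s (history y ((i : ℝ) * T)) ε))) ∂μ‖ ≤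
      C2 * C3 * α * L := by
  have hB : 0 < L / ε := div_pos hL hε.1
  have hpB : (p : ℝ) * T * ε ≤ L := (le_div_iff₀ hε.1).mp (hp1.trans ht.2)
  have hρmem : ∀ s ∈ Icc 0 (L / ε), ∀ u ∈ Icc 0 (L / ε),
      ρ s (history y u) ε ∈ Icc 0 (L / ε) :=
    fun s hs u hu => ⟨hρnn s hs.1 _ ε, (hC7 ε hε s hs.1 _ (hyhist u hu)).trans hs.2⟩
  have hterm : ∀ i ∈ Finset.range p,
      ‖∫ s in Set.Ico ((i : ℝ) * T) (((i : ℝ) + 1) * T),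
        (f s (history y (ρ s (history y s) ε)) -
          f s (history y (ρ s (history y ((i : ℝ) * T)) ε))) ∂μ‖ ≤
      C2 * (ε * C3 * T) * α := by
    intro i hi
    have hip : (i : ℝ) + 1 ≤ p := by exact_mod_cast Finset.mem_range.mp hi
    have hi0 : 0 ≤ (i : ℝ) * T := by positivity
    rw [add_one_mul]
    exact norm_setIntegral_Ico_delay_sub_le (φ := history y) (ρ := fun s x => ρ s x ε)
      hC2.le (by positivity [hε.1]) hT.le hα.le (hC6 _ hB y hy0 hyreg)
      (hC8 ε hε _ hB y hy0 hyreg) hρmem hi0 (by nlinarith [hp1.trans ht.2])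
      (measure_Ico_add_period hμ hper hi0 hT.le)
  calc _ ≤ (Finset.range p).card • (C2 * (ε * C3 * T) * α) :=
        Finset.sum_le_card_nsmul _ _ _ hterm
    _ = C2 * C3 * α * ((p : ℝ) * T * ε) := by rw [Finset.card_range, nsmul_eq_mul]; ring
    _ ≤ C2 * C3 * α * L := by gcongr

/-- estimate (4.6) in the proof of the periodic averaging
theorem. -/
theorem averaging_estimate_one
    (n : ℕ) (ε0 L T α M : ℝ)
    (hε0 : 0 < ε0) (hL : 0 < L) (hT : 0 < T) (hα : 0 < α) (hM : 0 < M)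
    -- the Banach space `𝓑` of regulated functions on `(-∞, 0]`
    (Bmem : (ℝ → Eu n) → Prop)
    (hBreg : ∀ φ : ℝ → Eu n, Bmem φ → RegulatedOnIic0 φ)
    -- the left-continuous nondecreasing function `h` with `h(t+T) - h(t) = α`
    (h : ℝ → ℝ) (hmono : MonotoneOn h (Set.Ici 0))
    (hlc : ∀ t > (0:ℝ), Filter.Tendsto h (nhdsWithin t (Set.Ico 0 t)) (nhds (h t)))
    (hper : ∀ t, 0 ≤ t → h (t + T) - h t = α)
    (μ : Measure ℝ)
    (hμ : ∀ a b : ℝ, 0 ≤ a → a ≤ b → μ (Set.Ico a b) = ENNReal.ofReal (h b - h a))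
    -- `f` bounded by `M`
    (f : ℝ → (ℝ → Eu n) → Eu n)
    (hfb : ∀ t, 0 ≤ t → ∀ x : ℝ → Eu n, Bmem x → ‖f t x‖ ≤ M)
    -- the delay functional `ρ`
    (ρ : ℝ → (ℝ → Eu n) → ℝ → ℝ)
    (hρnn : ∀ t, 0 ≤ t → ∀ (x : ℝ → Eu n) (e : ℝ), 0 ≤ ρ t x e)
    -- (C7)
    (hC7 : ∀ e ∈ Set.Ioc (0:ℝ) ε0, ∀ t, 0 ≤ t → ∀ x : ℝ → Eu n, Bmem x →
      ρ t x e ≤ t)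
    -- (C6')
    (C2 : ℝ) (hC2 : 0 < C2)
    (hC6 : ∀ b' : ℝ, 0 < b' → ∀ x : ℝ → Eu n, Bmem (history x 0) →
      RegulatedOnIcc x 0 b' → ∀ s, 0 ≤ s →
      ∀ a ∈ Set.Icc (0:ℝ) b', ∀ b ∈ Set.Icc (0:ℝ) b',
      ‖f s (history x a) - f s (history x b)‖ ≤ C2 * |a - b|)
    -- (C8)
    (C3 : ℝ) (hC3 : 0 < C3)
    (hC8 : ∀ e ∈ Set.Ioc (0:ℝ) ε0, ∀ b' : ℝ, 0 < b' → ∀ x : ℝ → Eu n,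
      Bmem (history x 0) → RegulatedOnIcc x 0 b' →
      ∀ t, 0 ≤ t → ∀ a ∈ Set.Icc (0:ℝ) b', ∀ b ∈ Set.Icc (0:ℝ) b',
      |ρ t (history x a) e - ρ t (history x b) e| ≤ e * C3 * |a - b|)
    -- the fixed `ε` and the function `y`
    (ε : ℝ) (hε : ε ∈ Set.Ioc (0:ℝ) ε0)
    (y : ℝ → Eu n) (hy0 : Bmem (history y 0))
    (hyreg : RegulatedOnIcc y 0 (L / ε))
    (hyhist : ∀ u ∈ Set.Icc (0:ℝ) (L / ε), Bmem (history y u))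
    -- integrability of the integrands
    (hint1 : MeasureTheory.IntegrableOn
      (fun s => f s (history y (ρ s (history y s) ε))) (Set.Icc 0 (L / ε)) μ)
    (hint2 : ∀ c ∈ Set.Icc (0:ℝ) (L / ε), MeasureTheory.IntegrableOn
      (fun s => f s (history y (ρ s (history y c) ε))) (Set.Icc 0 (L / ε)) μ)
    -- `t` and the largest integer `p` with `pT ≤ t`
    (t : ℝ) (ht : t ∈ Set.Icc (0:ℝ) (L / ε))
    (p : ℕ) (hp1 : (p : ℝ) * T ≤ t) (hp2 : t < ((p : ℝ) + 1) * T) :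
    ∑ i ∈ Finset.range p,
      ‖∫ s in Set.Ico ((i : ℝ) * T) (((i : ℝ) + 1) * T),
        (f s (history y (ρ s (history y s) ε)) -
          f s (history y (ρ s (history y ((i : ℝ) * T)) ε))) ∂μ‖ ≤
      C2 * C3 * α * L :=
  averaging_estimate_one_general n ε0 L T α hL hT hα Bmem h hper μ hμ f ρ hρnn hC7 C2 hC2 hC6 C3 hC3
    hC8 ε hε y hy0 hyreg hyhist t ht p hp1
end
end

section
/- Let ε ∈ (0, ε0], let y : (−∞, L/ε] → ℝ^n satisfy y_0 ∈ 𝓑 and y regulated on [0, L/ε], let t ∈ [0, L/ε], and let p be the largest integer with pT ≤ t. Then, with f0(x) := (1/T)∫_{0}^{T} f(s, x) dh(s), one has ∑_{i=1}^{p} ‖∫_{(i−1)T}^{iT} (f0(y_{ρ(s, y_s, ε)}) − f0(y_{ρ(s, y_{(i−1)T}, ε)})) ds‖ ≤ C2·C3·α·L, where the outer integrals are Lebesgue integrals with respect to s. -/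
open MeasureTheory Filter Set

noncomputable section

/-!
Averaging over one period is Lipschitz along `y` with constant `C2 α / T`, since `f` is
`C2`-Lipschitz in the history shift by (C6') and `μ_h[0, T) = α`. On the `i`-th period the two
delays `ρ(s, y_s, ε)` and `ρ(s, y_{iT}, ε)` differ by at most `ε C3 T` by (C8), and by (C7) both lie
in `[0, L/ε]`, where that Lipschitz bound applies. Each of the `p` integrals over an interval of
length `T` is therefore at most `C2 C3 α ε T`, and `p T ε ≤ t ε ≤ L`.
-/

theorem norm_smul_setIntegral_sub_smul_setIntegral_le {X E : Type*} [MeasurableSpace X]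
    [NormedAddCommGroup E] [NormedSpace ℝ E] {μ : Measure X} {S : Set X} (hS : μ S < ⊤)
    {f g : X → E} (hf : IntegrableOn f S μ) (hg : IntegrableOn g S μ) {K : ℝ}
    (hfg : ∀ s ∈ S, ‖f s - g s‖ ≤ K) (c : ℝ) :
    ‖c • ∫ s in S, f s ∂μ - c • ∫ s in S, g s ∂μ‖ ≤ |c| * (K * μ.real S) := by
  rw [← smul_sub, ← integral_sub hf hg, norm_smul, Real.norm_eq_abs]
  exact mul_le_mul_of_nonneg_left (norm_setIntegral_le_of_norm_le_const hS hfg) (abs_nonneg c)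

theorem sum_norm_setIntegral_Ico_mul_le {E : Type*} [NormedAddCommGroup E] [NormedSpace ℝ E]
    {T K : ℝ} (hT : 0 ≤ T) (p : ℕ) (F : ℕ → ℝ → E)
    (hF : ∀ i < p, ∀ s ∈ Ico ((i : ℝ) * T) ((i + 1) * T), ‖F i s‖ ≤ K) :
    ∑ i ∈ Finset.range p, ‖∫ s in Ico ((i : ℝ) * T) ((i + 1) * T), F i s‖ ≤ p * T * K := by
  calc ∑ i ∈ Finset.range p, ‖∫ s in Ico ((i : ℝ) * T) ((i + 1) * T), F i s‖
      ≤ ∑ _i ∈ Finset.range p, K * T := by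
        refine Finset.sum_le_sum fun i hi => ?_
        have hlen : (i : ℝ) * T ≤ (i + 1) * T := by linarith
        calc _ ≤ K * volume.real (Ico ((i : ℝ) * T) ((i + 1) * T)) :=
              norm_setIntegral_le_of_norm_le_const measure_Ico_lt_top
                (hF i (Finset.mem_range.1 hi))
          _ = K * T := by rw [Real.volume_real_Ico_of_le hlen]; ring
    _ = p * T * K := by rw [Finset.sum_const, Finset.card_range, nsmul_eq_mul]; ring

theorem averaging_estimate_two_general
    (n : ℕ) (ε0 L T α : ℝ)
    (hL : 0 < L) (hT : 0 < T) (hα : 0 < α)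
    -- the Banach space `𝓑` of regulated functions on `(-∞, 0]`
    (Bmem : (ℝ → Eu n) → Prop)
    -- the left-continuous nondecreasing function `h` with `h(t+T) - h(t) = α`
    (h : ℝ → ℝ)
    (hper : ∀ t, 0 ≤ t → h (t + T) - h t = α)
    (μ : Measure ℝ)
    (hμ : ∀ a b : ℝ, 0 ≤ a → a ≤ b → μ (Set.Ico a b) = ENNReal.ofReal (h b - h a))
    (f : ℝ → (ℝ → Eu n) → Eu n)
    -- the delay functional `ρ`
    (ρ : ℝ → (ℝ → Eu n) → ℝ → ℝ)
    (hρnn : ∀ t, 0 ≤ t → ∀ (x : ℝ → Eu n) (e : ℝ), 0 ≤ ρ t x e)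
    -- (C7)
    (hC7 : ∀ e ∈ Set.Ioc (0:ℝ) ε0, ∀ t, 0 ≤ t → ∀ x : ℝ → Eu n, Bmem x →
      ρ t x e ≤ t)
    -- (C6')
    (C2 : ℝ) (hC2 : 0 < C2)
    (hC6 : ∀ b' : ℝ, 0 < b' → ∀ x : ℝ → Eu n, Bmem (history x 0) →
      RegulatedOnIcc x 0 b' → ∀ s, 0 ≤ s →
      ∀ a ∈ Set.Icc (0:ℝ) b', ∀ b ∈ Set.Icc (0:ℝ) b',
      ‖f s (history x a) - f s (history x b)‖ ≤ C2 * |a - b|)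
    -- (C8)
    (C3 : ℝ) (hC3 : 0 < C3)
    (hC8 : ∀ e ∈ Set.Ioc (0:ℝ) ε0, ∀ b' : ℝ, 0 < b' → ∀ x : ℝ → Eu n,
      Bmem (history x 0) → RegulatedOnIcc x 0 b' →
      ∀ t, 0 ≤ t → ∀ a ∈ Set.Icc (0:ℝ) b', ∀ b ∈ Set.Icc (0:ℝ) b',
      |ρ t (history x a) e - ρ t (history x b) e| ≤ e * C3 * |a - b|)
    -- the fixed `ε` and the function `y`
    (ε : ℝ) (hε : ε ∈ Set.Ioc (0:ℝ) ε0)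
    (y : ℝ → Eu n) (hy0 : Bmem (history y 0))
    (hyreg : RegulatedOnIcc y 0 (L / ε))
    (hyhist : ∀ u ∈ Set.Icc (0:ℝ) (L / ε), Bmem (history y u))
    -- the averaged function `f0`
    (hfint : ∀ x : ℝ → Eu n, Bmem x →
      MeasureTheory.IntegrableOn (fun s => f s x) (Set.Ico 0 T) μ)
    (f0 : (ℝ → Eu n) → Eu n)
    (hf0 : ∀ x : ℝ → Eu n, f0 x = (1 / T) • ∫ s in Set.Ico (0:ℝ) T, f s x ∂μ)
    -- `t` and the largest integer `p` with `pT ≤ t`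
    (t : ℝ) (ht : t ∈ Set.Icc (0:ℝ) (L / ε))
    (p : ℕ) (hp1 : (p : ℝ) * T ≤ t) :
    ∑ i ∈ Finset.range p,
      ‖∫ s in Set.Ico ((i : ℝ) * T) (((i : ℝ) + 1) * T),
        (f0 (history y (ρ s (history y s) ε)) -
          f0 (history y (ρ s (history y ((i : ℝ) * T)) ε)))‖ ≤
      C2 * C3 * α * L := by
  have hε_pos : 0 < ε := hε.1
  have hLε : 0 < L / ε := div_pos hL hε_pos
  have hμT : μ (Ico 0 T) = ENNReal.ofReal α := by
    rw [hμ 0 T le_rfl hT.le, ← hper 0 le_rfl, zero_add]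
  have hf0_lipschitz : ∀ a ∈ Icc 0 (L / ε), ∀ b ∈ Icc 0 (L / ε),
      ‖f0 (history y a) - f0 (history y b)‖ ≤ C2 * α / T * |a - b| := by
    intro a ha b hb
    calc ‖f0 (history y a) - f0 (history y b)‖
        ≤ |1 / T| * (C2 * |a - b| * μ.real (Ico 0 T)) := by
          rw [hf0, hf0]
          exact norm_smul_setIntegral_sub_smul_setIntegral_le (hμT ▸ ENNReal.ofReal_lt_top)
            (hfint _ (hyhist a ha)) (hfint _ (hyhist b hb))
            (fun s hs => hC6 _ hLε y hy0 hyreg s hs.1 a ha b hb) _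
      _ = C2 * α / T * |a - b| := by
          rw [measureReal_def, hμT, ENNReal.toReal_ofReal hα.le, abs_of_pos (by positivity)]
          ring
  have hperiod : ∀ i < p, ∀ s ∈ Ico ((i : ℝ) * T) ((i + 1) * T),
      ‖f0 (history y (ρ s (history y s) ε)) - f0 (history y (ρ s (history y (i * T)) ε))‖ ≤
        C2 * C3 * α * ε := by
    intro i hi s hs
    have hiT : 0 ≤ (i : ℝ) * T := by positivity
    have hip : (i : ℝ) + 1 ≤ p := by exact_mod_cast hi
    have hsL : s ≤ L / ε :=
      calc s ≤ (i + 1) * T := hs.2.le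
        _ ≤ p * T := mul_le_mul_of_nonneg_right hip hT.le
        _ ≤ L / ε := hp1.trans ht.2
    have hs_mem : s ∈ Icc 0 (L / ε) := ⟨hiT.trans hs.1, hsL⟩
    have hiT_mem : (i : ℝ) * T ∈ Icc 0 (L / ε) := ⟨hiT, hs.1.trans hsL⟩
    have hdelay_mem : ∀ c ∈ Icc 0 (L / ε), ρ s (history y c) ε ∈ Icc 0 (L / ε) := fun c hc =>
      ⟨hρnn s hs_mem.1 _ _, (hC7 ε hε s hs_mem.1 _ (hyhist c hc)).trans hsL⟩
    have hdelay_dist : |ρ s (history y s) ε - ρ s (history y (i * T)) ε| ≤ ε * C3 * T :=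
      calc _ ≤ ε * C3 * |s - i * T| := hC8 ε hε _ hLε y hy0 hyreg s hs_mem.1 s hs_mem _ hiT_mem
        _ ≤ ε * C3 * T := by
          gcongr
          rw [abs_of_nonneg (sub_nonneg.2 hs.1)]
          linarith [hs.2]
    calc _ ≤ C2 * α / T * |ρ s (history y s) ε - ρ s (history y (i * T)) ε| :=
          hf0_lipschitz _ (hdelay_mem s hs_mem) _ (hdelay_mem _ hiT_mem)
      _ ≤ C2 * α / T * (ε * C3 * T) := by gcongr
      _ = C2 * C3 * α * ε := by field_simp
  calc _ ≤ p * T * (C2 * C3 * α * ε) := sum_norm_setIntegral_Ico_mul_le hT.le p _ hperiod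
    _ = C2 * C3 * α * (p * T * ε) := by ring
    _ ≤ C2 * C3 * α * L := by
        gcongr
        exact (le_div_iff₀ hε_pos).1 (hp1.trans ht.2)

/-- the estimate (4.7) in the proof of the periodic averaging
theorem, for the averaged function `f0`. -/
theorem averaging_estimate_two
    (n : ℕ) (ε0 L T α M : ℝ)
    (hε0 : 0 < ε0) (hL : 0 < L) (hT : 0 < T) (hα : 0 < α) (hM : 0 < M)
    -- the Banach space `𝓑` of regulated functions on `(-∞, 0]`
    (Bmem : (ℝ → Eu n) → Prop)
    (hBreg : ∀ φ : ℝ → Eu n, Bmem φ → RegulatedOnIic0 φ)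
    -- the left-continuous nondecreasing function `h` with `h(t+T) - h(t) = α`
    (h : ℝ → ℝ) (hmono : MonotoneOn h (Set.Ici 0))
    (hlc : ∀ t > (0:ℝ), Filter.Tendsto h (nhdsWithin t (Set.Ico 0 t)) (nhds (h t)))
    (hper : ∀ t, 0 ≤ t → h (t + T) - h t = α)
    (μ : Measure ℝ)
    (hμ : ∀ a b : ℝ, 0 ≤ a → a ≤ b → μ (Set.Ico a b) = ENNReal.ofReal (h b - h a))
    -- `f` bounded by `M`
    (f : ℝ → (ℝ → Eu n) → Eu n)
    (hfb : ∀ t, 0 ≤ t → ∀ x : ℝ → Eu n, Bmem x → ‖f t x‖ ≤ M)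
    -- the delay functional `ρ`
    (ρ : ℝ → (ℝ → Eu n) → ℝ → ℝ)
    (hρnn : ∀ t, 0 ≤ t → ∀ (x : ℝ → Eu n) (e : ℝ), 0 ≤ ρ t x e)
    -- (C7)
    (hC7 : ∀ e ∈ Set.Ioc (0:ℝ) ε0, ∀ t, 0 ≤ t → ∀ x : ℝ → Eu n, Bmem x →
      ρ t x e ≤ t)
    -- (C6')
    (C2 : ℝ) (hC2 : 0 < C2)
    (hC6 : ∀ b' : ℝ, 0 < b' → ∀ x : ℝ → Eu n, Bmem (history x 0) →
      RegulatedOnIcc x 0 b' → ∀ s, 0 ≤ s →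
      ∀ a ∈ Set.Icc (0:ℝ) b', ∀ b ∈ Set.Icc (0:ℝ) b',
      ‖f s (history x a) - f s (history x b)‖ ≤ C2 * |a - b|)
    -- (C8)
    (C3 : ℝ) (hC3 : 0 < C3)
    (hC8 : ∀ e ∈ Set.Ioc (0:ℝ) ε0, ∀ b' : ℝ, 0 < b' → ∀ x : ℝ → Eu n,
      Bmem (history x 0) → RegulatedOnIcc x 0 b' →
      ∀ t, 0 ≤ t → ∀ a ∈ Set.Icc (0:ℝ) b', ∀ b ∈ Set.Icc (0:ℝ) b',
      |ρ t (history x a) e - ρ t (history x b) e| ≤ e * C3 * |a - b|)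
    -- the fixed `ε` and the function `y`
    (ε : ℝ) (hε : ε ∈ Set.Ioc (0:ℝ) ε0)
    (y : ℝ → Eu n) (hy0 : Bmem (history y 0))
    (hyreg : RegulatedOnIcc y 0 (L / ε))
    (hyhist : ∀ u ∈ Set.Icc (0:ℝ) (L / ε), Bmem (history y u))
    -- the averaged function `f0`
    (hfint : ∀ x : ℝ → Eu n, Bmem x →
      MeasureTheory.IntegrableOn (fun s => f s x) (Set.Ico 0 T) μ)
    (f0 : (ℝ → Eu n) → Eu n)
    (hf0 : ∀ x : ℝ → Eu n, f0 x = (1 / T) • ∫ s in Set.Ico (0:ℝ) T, f s x ∂μ)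
    -- integrability (w.r.t. Lebesgue measure) of the integrands
    (hint1 : MeasureTheory.IntegrableOn
      (fun s => f0 (history y (ρ s (history y s) ε))) (Set.Icc 0 (L / ε)))
    (hint2 : ∀ c ∈ Set.Icc (0:ℝ) (L / ε), MeasureTheory.IntegrableOn
      (fun s => f0 (history y (ρ s (history y c) ε))) (Set.Icc 0 (L / ε)))
    -- `t` and the largest integer `p` with `pT ≤ t`
    (t : ℝ) (ht : t ∈ Set.Icc (0:ℝ) (L / ε))
    (p : ℕ) (hp1 : (p : ℝ) * T ≤ t) (hp2 : t < ((p : ℝ) + 1) * T) :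
    ∑ i ∈ Finset.range p,
      ‖∫ s in Set.Ico ((i : ℝ) * T) (((i : ℝ) + 1) * T),
        (f0 (history y (ρ s (history y s) ε)) -
          f0 (history y (ρ s (history y ((i : ℝ) * T)) ε)))‖ ≤
      C2 * C3 * α * L :=
  averaging_estimate_two_general n ε0 L T α hL hT hα Bmem h hper μ hμ f ρ hρnn hC7 C2 hC2 hC6 C3 hC3
    hC8 ε hε y hy0 hyreg hyhist hfint f0 hf0 t ht p hp1
end
end

section
/- For all s ≥ 0 and all x, y ∈ BG_q, the state-dependent delay functional ρ(t, x) = t − ∫_{−∞}^{−t} |T(θ)| tanh(|x(θ − t)|) dθ satisfies |ρ(s, y) − ρ(s, x)| ≤ (sup_{θ ≤ 0} |T(θ)|) · (∫_{−∞}^{0} e^{u} du) · ‖y − x‖_{BG_q} = (sup_{θ ≤ 0} |T(θ)|) · ‖y − x‖_{BG_q}. -/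
open MeasureTheory Filter Set

noncomputable section

/-- Membership in the phase space `BG_q` with `q θ = e^θ`: regulated on
`(-∞,0]` with `|φ θ|/q θ` bounded. -/
def BGqMem (φ : ℝ → ℝ) : Prop :=
  RegulatedOnIic0 φ ∧ BddAbove ((fun θ => |φ θ| * Real.exp (-θ)) '' Set.Iic 0)

/-- The norm `‖φ‖_{BG_q} = sup_{θ ≤ 0} |φ θ| e^{-θ}`. -/
def BGqNorm (φ : ℝ → ℝ) : ℝ :=
  sSup ((fun θ => |φ θ| * Real.exp (-θ)) '' Set.Iic 0)

/-- The state-dependent delay functional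
`ρ(t,x) = t - ∫_{-∞}^{-t} |T θ| tanh |x (θ - t)| dθ`. -/
def rhoT (Tf : ℝ → ℝ) (t : ℝ) (x : ℝ → ℝ) : ℝ :=
  t - ∫ θ in Set.Iic (-t), |Tf θ| * Real.tanh |x (θ - t)|

/-- The functional `f(t,x) = cos² t ∫_{-∞}^{0} T θ tanh (x θ) dθ`. -/
def fT (Tf : ℝ → ℝ) (t : ℝ) (x : ℝ → ℝ) : ℝ :=
  Real.cos t ^ 2 * ∫ θ in Set.Iic (0:ℝ), Tf θ * Real.tanh (x θ)

/-! Since `tanh ∘ |·|` is `1`-Lipschitz, the integrand of `ρ(s, y) - ρ(s, x)` is bounded by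
`(sup |T|) |y(θ - s) - x(θ - s)| ≤ (sup |T|) ‖y - x‖ e^θ`, whose integral over `θ ≤ -s` is at most
`(sup |T|) ‖y - x‖`. The delicate point is that both integrals defining `ρ` must exist, i.e. that
a regulated function is measurable: it agrees with its one-sided limits off a countable set, hence
is continuous off a countable set. -/

open scoped Topology
open Function (leftLim rightLim)

section OneSidedLimits

variable {α E : Type*} [LinearOrder α] [TopologicalSpace α] [OrderTopology α] [MetricSpace E]
  {f : α → E} {U : Set α}

/-- Just left of `t`, both `f` and its left limit are close to `leftLim f t`. -/
theorem nhdsWithin_setOf_le_dist_leftLim_inter_Iio_eq_bot [NoMinOrder α]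
    (hU : ∀ t ∈ U, U ∈ 𝓝[<] t) (hf : ∀ t ∈ U, ∃ l, Tendsto f (𝓝[<] t) (𝓝 l))
    {ε : ℝ} (hε : 0 < ε) {t : α} (ht : t ∈ U) :
    𝓝[{u ∈ U | ε ≤ dist (f u) (leftLim f u)} ∩ Iio t] t = ⊥ := by
  have hlim : ∀ u ∈ U, Tendsto f (𝓝[<] u) (𝓝 (leftLim f u)) :=
    fun u hu => tendsto_leftLim_of_tendsto (hf u hu)
  have hnear : ∀ᶠ u in 𝓝[<] t, u ∈ U ∧ dist (f u) (leftLim f t) < ε / 3 :=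
    Filter.Eventually.and (hU t ht)
      ((hlim t ht).eventually (Metric.ball_mem_nhds _ (by positivity)))
  obtain ⟨a, hat, hIoo⟩ := mem_nhdsLT_iff_exists_Ioo_subset.mp hnear
  have hdisj : ∀ u ∈ Ioo a t, dist (f u) (leftLim f u) < ε := by
    intro u hu
    rcases eq_or_neBot (𝓝[<] u) with hbot | _
    · rwa [leftLim_eq_of_eq_bot f hbot, dist_self]
    have hlim_u : dist (leftLim f u) (leftLim f t) ≤ ε / 3 := by
      refine le_of_tendsto ((hlim u (hIoo hu).1).dist tendsto_const_nhds) ?_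
      filter_upwards [Ioo_mem_nhdsLT hu.1] with v hv
      exact (hIoo ⟨hv.1, hv.2.trans hu.2⟩).2.le
    linarith [dist_triangle_right (f u) (leftLim f u) (leftLim f t), (hIoo hu).2]
  rw [← empty_mem_iff_bot]
  filter_upwards [self_mem_nhdsWithin,
    nhdsWithin_mono t inter_subset_right (Ioo_mem_nhdsLT hat)] with u hu hua
  exact (hdisj u hua).not_ge hu.1.2

theorem countable_setOf_ne_leftLim [SecondCountableTopology α] [NoMinOrder α]
    (hU : ∀ t ∈ U, U ∈ 𝓝[<] t) (hf : ∀ t ∈ U, ∃ l, Tendsto f (𝓝[<] t) (𝓝 l)) :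
    {t ∈ U | f t ≠ leftLim f t}.Countable := by
  have hcover : {t ∈ U | f t ≠ leftLim f t} ⊆
      ⋃ n : ℕ, {t ∈ {u ∈ U | 1 / (n + 1 : ℝ) ≤ dist (f u) (leftLim f u)} |
        𝓝[{u ∈ U | 1 / (n + 1 : ℝ) ≤ dist (f u) (leftLim f u)} ∩ Iio t] t = ⊥} := by
    rintro t ⟨htU, hne⟩
    obtain ⟨n, hn⟩ := exists_nat_one_div_lt (dist_pos.mpr hne)
    have htn : t ∈ {u ∈ U | 1 / (n + 1 : ℝ) ≤ dist (f u) (leftLim f u)} := ⟨htU, hn.le⟩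
    exact mem_iUnion.mpr ⟨n, htn,
      nhdsWithin_setOf_le_dist_leftLim_inter_Iio_eq_bot hU hf (by positivity) htU⟩
  exact (countable_iUnion fun _ => countable_setOfPred_isolated_left_within).mono hcover

theorem countable_setOf_ne_rightLim [SecondCountableTopology α] [NoMaxOrder α]
    (hU : ∀ t ∈ U, U ∈ 𝓝[>] t) (hf : ∀ t ∈ U, ∃ l, Tendsto f (𝓝[>] t) (𝓝 l)) :
    {t ∈ U | f t ≠ rightLim f t}.Countable :=
  countable_setOf_ne_leftLim (α := αᵒᵈ) hU hf

end OneSidedLimits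

namespace RegulatedOnIic0

variable {φ : ℝ → ℝ}

theorem exists_countable_continuousOn (hφ : RegulatedOnIic0 φ) :
    ∃ D : Set ℝ, D.Countable ∧ ContinuousOn φ (Iic 0 \ D) := by
  obtain ⟨hleft, hright⟩ := hφ
  have hright' : ∀ t ∈ Iio (0 : ℝ), ∃ l, Tendsto φ (𝓝[>] t) (𝓝 l) := fun t ht => by
    simpa only [nhdsWithin_Ioo_eq_nhdsGT (mem_Iio.mp ht)] using hright t ht
  refine ⟨{0} ∪ {t ∈ Iic 0 | φ t ≠ leftLim φ t} ∪ {t ∈ Iio 0 | φ t ≠ rightLim φ t},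
    ((countable_singleton 0).union (countable_setOf_ne_leftLim
      (fun t ht => mem_of_superset self_mem_nhdsWithin
        (Iio_subset_Iic_self.trans (Iic_subset_Iic.mpr ht))) hleft)).union
      (countable_setOf_ne_rightLim (fun t ht => mem_nhdsWithin_of_mem_nhds (Iio_mem_nhds ht))
        hright'), ?_⟩
  rintro t ⟨ht0, htD⟩
  simp only [mem_union, mem_singleton_iff, mem_ofPred_eq, not_or, not_and, not_not] at htD
  obtain ⟨⟨htne, hL⟩, hR⟩ := htD
  have htneg : t < 0 := lt_of_le_of_ne ht0 htne
  refine ContinuousAt.continuousWithinAt (continuousAt_iff_continuous_left_right.mpr ⟨?_, ?_⟩)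
  · rw [← continuousWithinAt_Iio_iff_Iic, ContinuousWithinAt, hL ht0]
    exact tendsto_leftLim_of_tendsto (hleft t ht0)
  · rw [← continuousWithinAt_Ioi_iff_Ici, ContinuousWithinAt, hR htneg]
    exact tendsto_rightLim_of_tendsto (hright' t htneg)

theorem aestronglyMeasurable (hφ : RegulatedOnIic0 φ) :
    AEStronglyMeasurable φ (volume.restrict (Iic 0)) := by
  obtain ⟨D, hD, hcont⟩ := hφ.exists_countable_continuousOn
  rw [← Measure.restrict_congr_set (sdiff_null_ae_eq_self (hD.measure_zero volume))]
  exact hcont.aestronglyMeasurable (measurableSet_Iic.diff hD.measurableSet)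

theorem aestronglyMeasurable_comp_sub (hφ : RegulatedOnIic0 φ) {s : ℝ} (hs : 0 ≤ s) :
    AEStronglyMeasurable (fun θ => φ (θ - s)) (volume.restrict (Iic (-s))) := by
  have hshift :=
    (measurePreserving_sub_right volume s).restrict_preimage (s := Iic 0) measurableSet_Iic
  refine (hφ.aestronglyMeasurable.comp_measurePreserving hshift).mono_measure
    (Measure.restrict_mono ?_ le_rfl)
  intro θ hθ
  simp only [mem_preimage, mem_Iic] at hθ ⊢
  linarith

end RegulatedOnIic0

section BGq

variable {φ : ℝ → ℝ}

theorem BGqNorm_nonneg (hφ : BddAbove ((fun θ => |φ θ| * Real.exp (-θ)) '' Iic 0)) :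
    0 ≤ BGqNorm φ :=
  (mul_nonneg (abs_nonneg _) (Real.exp_pos _).le).trans (le_csSup hφ ⟨0, le_refl (0 : ℝ), rfl⟩)

theorem abs_le_BGqNorm_mul_exp (hφ : BddAbove ((fun θ => |φ θ| * Real.exp (-θ)) '' Iic 0))
    {u : ℝ} (hu : u ≤ 0) : |φ u| ≤ BGqNorm φ * Real.exp u := by
  calc |φ u| = |φ u| * Real.exp (-u) * Real.exp u := by
        rw [mul_assoc, ← Real.exp_add, neg_add_cancel, Real.exp_zero, mul_one]
    _ ≤ BGqNorm φ * Real.exp u :=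
        mul_le_mul_of_nonneg_right (le_csSup hφ ⟨u, hu, rfl⟩) (Real.exp_pos u).le

theorem BGqMem.bddAbove_sub {x y : ℝ → ℝ} (hx : BGqMem x) (hy : BGqMem y) :
    BddAbove ((fun θ => |(y - x) θ| * Real.exp (-θ)) '' Iic 0) := by
  obtain ⟨Cx, hCx⟩ := hx.2
  obtain ⟨Cy, hCy⟩ := hy.2
  refine ⟨Cy + Cx, ?_⟩
  rintro _ ⟨θ, hθ, rfl⟩
  calc |(y - x) θ| * Real.exp (-θ) ≤ (|y θ| + |x θ|) * Real.exp (-θ) :=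
        mul_le_mul_of_nonneg_right (abs_sub _ _) (Real.exp_pos _).le
    _ = |y θ| * Real.exp (-θ) + |x θ| * Real.exp (-θ) := add_mul _ _ _
    _ ≤ Cy + Cx := add_le_add (hCy ⟨θ, hθ, rfl⟩) (hCx ⟨θ, hθ, rfl⟩)

end BGq

theorem Real.hasDerivAt_tanh (x : ℝ) : HasDerivAt Real.tanh (1 / Real.cosh x ^ 2) x := by
  have h := (Real.hasDerivAt_sinh x).div (Real.hasDerivAt_cosh x) (Real.cosh_pos x).ne'
  rw [show Real.cosh x * Real.cosh x - Real.sinh x * Real.sinh x = 1 by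
    rw [← Real.cosh_sq_sub_sinh_sq x]; ring] at h
  rwa [show Real.tanh = Real.sinh / Real.cosh from funext Real.tanh_eq_sinh_div_cosh]

theorem Real.lipschitzWith_tanh : LipschitzWith 1 Real.tanh := by
  refine lipschitzWith_of_nnnorm_deriv_le (fun x => (Real.hasDerivAt_tanh x).differentiableAt)
    fun x => ?_
  rw [← NNReal.coe_le_coe, coe_nnnorm, NNReal.coe_one, (Real.hasDerivAt_tanh x).deriv,
    Real.norm_eq_abs, abs_of_nonneg (by positivity), div_le_one (by positivity)]
  nlinarith [Real.one_le_cosh x]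

theorem Real.abs_tanh_abs_sub_tanh_abs_le (a b : ℝ) :
    |Real.tanh (|a|) - Real.tanh (|b|)| ≤ |a - b| := by
  have h := Real.lipschitzWith_tanh.dist_le_mul |a| |b|
  rw [NNReal.coe_one, one_mul, Real.dist_eq, Real.dist_eq] at h
  exact h.trans (abs_abs_sub_abs_le_abs_sub a b)

theorem Real.abs_tanh_abs_le (a : ℝ) : |Real.tanh (|a|)| ≤ |a| := by
  simpa using Real.abs_tanh_abs_sub_tanh_abs_le a 0

theorem abs_setIntegral_Iic_le_of_abs_le_mul_exp {g : ℝ → ℝ} {a K : ℝ}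
    (hg : ∀ θ ≤ a, |g θ| ≤ K * Real.exp θ) :
    |(∫ θ in Iic a, g θ)| ≤ K * Real.exp a := by
  rw [← integral_exp_Iic, ← integral_const_mul, ← Real.norm_eq_abs]
  refine norm_integral_le_of_norm_le ((integrableOn_exp_Iic a).const_mul K) ?_
  filter_upwards [ae_restrict_mem measurableSet_Iic] with θ hθ using hg θ hθ

theorem integrableOn_Iic_of_abs_le_mul_exp {g : ℝ → ℝ} {a K : ℝ}
    (hmeas : AEStronglyMeasurable g (volume.restrict (Iic a)))
    (hg : ∀ θ ≤ a, |g θ| ≤ K * Real.exp θ) : IntegrableOn g (Iic a) := by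
  refine Integrable.mono' ((integrableOn_exp_Iic a).const_mul K) hmeas ?_
  filter_upwards [ae_restrict_mem measurableSet_Iic] with θ hθ using hg θ hθ

section ShiftedIntegrand

variable {Tf : ℝ → ℝ} {M s : ℝ}

theorem abs_mul_abs_comp_sub_le_mul_exp (hM : ∀ θ ≤ (0 : ℝ), |Tf θ| ≤ M) (hs : 0 ≤ s)
    {φ : ℝ → ℝ} (hφ : BddAbove ((fun θ => |φ θ| * Real.exp (-θ)) '' Iic 0)) {θ : ℝ}
    (hθ : θ ≤ -s) : |Tf θ| * |φ (θ - s)| ≤ M * BGqNorm φ * Real.exp θ := by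
  have hM0 : 0 ≤ M := (abs_nonneg _).trans (hM 0 le_rfl)
  calc |Tf θ| * |φ (θ - s)| ≤ M * (BGqNorm φ * Real.exp (θ - s)) :=
        mul_le_mul (hM θ (by linarith)) (abs_le_BGqNorm_mul_exp hφ (by linarith))
          (abs_nonneg _) hM0
    _ ≤ M * (BGqNorm φ * Real.exp θ) := by
        gcongr
        · exact BGqNorm_nonneg hφ
        · linarith
    _ = M * BGqNorm φ * Real.exp θ := (mul_assoc _ _ _).symm

theorem integrableOn_abs_mul_tanh_abs_comp_sub (hT : ContinuousOn Tf (Iic 0))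
    (hM : ∀ θ ≤ (0 : ℝ), |Tf θ| ≤ M) (hs : 0 ≤ s) {φ : ℝ → ℝ} (hφ : BGqMem φ) :
    IntegrableOn (fun θ => |Tf θ| * Real.tanh |φ (θ - s)|) (Iic (-s)) := by
  have hTmeas : AEStronglyMeasurable (fun θ => |Tf θ|) (volume.restrict (Iic (-s))) :=
    (hT.abs.aestronglyMeasurable measurableSet_Iic).mono_measure
      (Measure.restrict_mono (Iic_subset_Iic.mpr (by linarith)) le_rfl)
  refine integrableOn_Iic_of_abs_le_mul_exp (K := M * BGqNorm φ)
    (hTmeas.mul ((Real.lipschitzWith_tanh.continuous.comp continuous_abs)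
      |>.comp_aestronglyMeasurable (hφ.1.aestronglyMeasurable_comp_sub hs))) fun θ hθ => ?_
  rw [abs_mul, abs_abs]
  exact (mul_le_mul_of_nonneg_left (Real.abs_tanh_abs_le _) (abs_nonneg _)).trans
    (abs_mul_abs_comp_sub_le_mul_exp hM hs hφ.2 hθ)

end ShiftedIntegrand

theorem rhoT_lipschitz_general
    (Tf : ℝ → ℝ)
    (hTcont : ContinuousOn Tf (Set.Iic 0))
    (hTbdd : ∃ C : ℝ, ∀ θ ≤ (0:ℝ), |Tf θ| ≤ C) :
    ∀ s, 0 ≤ s → ∀ x y : ℝ → ℝ, BGqMem x → BGqMem y →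
      |rhoT Tf s y - rhoT Tf s x| ≤
        (sSup ((fun θ => |Tf θ|) '' Set.Iic 0)) *
          (∫ u in Set.Iic (0:ℝ), Real.exp u) * BGqNorm (y - x) ∧
      |rhoT Tf s y - rhoT Tf s x| ≤
        (sSup ((fun θ => |Tf θ|) '' Set.Iic 0)) * BGqNorm (y - x) := by
  intro s hs x y hx hy
  set M := sSup ((fun θ => |Tf θ|) '' Set.Iic 0)
  obtain ⟨C, hC⟩ := hTbdd
  have hM : ∀ θ ≤ (0 : ℝ), |Tf θ| ≤ M := fun θ hθ =>
    le_csSup ⟨C, by rintro _ ⟨u, hu, rfl⟩; exact hC u hu⟩ ⟨θ, hθ, rfl⟩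
  have hdiff : rhoT Tf s y - rhoT Tf s x = ∫ θ in Iic (-s),
      (|Tf θ| * Real.tanh |x (θ - s)| - |Tf θ| * Real.tanh |y (θ - s)|) := by
    rw [integral_sub (integrableOn_abs_mul_tanh_abs_comp_sub hTcont hM hs hx)
      (integrableOn_abs_mul_tanh_abs_comp_sub hTcont hM hs hy), rhoT, rhoT]
    ring
  have hN := hx.bddAbove_sub hy
  have hpoint : ∀ θ ≤ -s, |(|Tf θ| * Real.tanh |x (θ - s)| - |Tf θ| * Real.tanh |y (θ - s)|)|
      ≤ M * BGqNorm (y - x) * Real.exp θ := fun θ hθ => by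
    rw [← mul_sub, abs_mul, abs_abs, abs_sub_comm]
    exact (mul_le_mul_of_nonneg_left (Real.abs_tanh_abs_sub_tanh_abs_le _ _) (abs_nonneg _)).trans
      (abs_mul_abs_comp_sub_le_mul_exp hM hs hN hθ)
  have hbound : |rhoT Tf s y - rhoT Tf s x| ≤ M * BGqNorm (y - x) := by
    rw [hdiff]
    refine (abs_setIntegral_Iic_le_of_abs_le_mul_exp hpoint).trans
      (mul_le_of_le_one_right ?_ (Real.exp_le_one_iff.mpr (by linarith)))
    exact mul_nonneg ((abs_nonneg _).trans (hM 0 le_rfl)) (BGqNorm_nonneg hN)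
  rw [integral_exp_Iic_zero, mul_one]
  exact ⟨hbound, hbound⟩

/-- the delay functional `ρ` is Lipschitz in its second
variable:
`|ρ(s,y) - ρ(s,x)| ≤ (sup_{θ ≤ 0}|T θ|) (∫_{-∞}^0 e^u du) ‖y - x‖_{BG_q}`
`= (sup_{θ ≤ 0}|T θ|) ‖y - x‖_{BG_q}`. -/
theorem rhoT_lipschitz
    (Tf : ℝ → ℝ)
    (hTcont : ContinuousOn Tf (Set.Iic 0))
    (hTbdd : ∃ C : ℝ, ∀ θ ≤ (0:ℝ), |Tf θ| ≤ C)
    (hTa : ∃ C : ℝ, ∀ θ ≤ (0:ℝ), |Tf θ| * Real.exp (-θ) ≤ C)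
    (hTb : MeasureTheory.IntegrableOn (fun θ => |Tf θ| * Real.exp θ) (Set.Iic 0))
    (hTc : ∃ D : ℝ, 0 < D ∧ ∀ t1, 0 ≤ t1 → ∀ t2, 0 ≤ t2 →
      (∫ θ in Set.Iic (0:ℝ), |Tf (θ - t2) - Tf (θ - t1)|) ≤ D * |t2 - t1|) :
    ∀ s, 0 ≤ s → ∀ x y : ℝ → ℝ, BGqMem x → BGqMem y →
      |rhoT Tf s y - rhoT Tf s x| ≤
        (sSup ((fun θ => |Tf θ|) '' Set.Iic 0)) *
          (∫ u in Set.Iic (0:ℝ), Real.exp u) * BGqNorm (y - x) ∧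
      |rhoT Tf s y - rhoT Tf s x| ≤
        (sSup ((fun θ => |Tf θ|) '' Set.Iic 0)) * BGqNorm (y - x) :=
  rhoT_lipschitz_general Tf hTcont hTbdd
end
end

section
/- Let σ > 0 and let x : (−∞, σ] → ℝ be such that x_0 ∈ BG_q and x is regulated on [0, σ], where x_a(θ) := x(a + θ). Then for all s ≥ 0 and all 0 ≤ b ≤ a ≤ σ, the functional f(t, x) = cos²(t) ∫_{−∞}^{0} T(θ) tanh(x(θ)) dθ satisfies |f(s, x_a) − f(s, x_b)| ≤ (2D + sup_{θ ≤ 0} |T(θ)|) · |a − b|, where D is the constant from property (c) of T. -/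
open MeasureTheory Filter Set

noncomputable section

/-! After the substitution `θ ↦ θ + (a - b)`, the integral defining `f(s, x_a)` becomes one of
`T (θ - (a - b)) tanh (x (b + θ))` over `θ ≤ a - b`. Its part over `θ ≤ 0` differs from the
integral defining `f(s, x_b)` by at most `∫ |T (θ - (a - b)) - T θ| ≤ D (a - b)`, and its part
over `(0, a - b]` is at most `sup |T| · (a - b)`, since `|tanh| ≤ 1` and `cos² ≤ 1`.

For these integrals to be meaningful `x` must be measurable on `(-∞, σ]`. Being regulated, `x`
has right limits there, so it agrees with its right-limit function off a countable set, and at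
all other points it is the pointwise limit of the measurable functions `x ∘ step n`, where
`step n` approximates the identity from the right through countably many values. -/

open Topology

theorem Real.continuous_tanh : Continuous Real.tanh := by
  simp_rw [funext Real.tanh_eq_sinh_div_cosh]
  exact Real.continuous_sinh.div Real.continuous_cosh fun x => (Real.cosh_pos x).ne'

section RightLimits

variable {E : Type*} [MetricSpace E] {f : ℝ → E} {s : Set ℝ}

theorem countable_setOf_ne_rightLim_s19 (hf : ∀ t ∈ s, Tendsto f (𝓝[>] t) (𝓝 (f.rightLim t))) :
    {t ∈ s | f t ≠ f.rightLim t}.Countable := by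
  set g := f.rightLim
  have hA : ∀ ε > 0, {t ∈ s | ε ≤ dist (f t) (g t)}.Countable := by
    intro ε hε
    set A := {t ∈ s | ε ≤ dist (f t) (g t)}
    -- Each `t ∈ A` is isolated from the right in `A`: just right of `t`, both `f` and its right
    -- limit `g` stay within `ε / 2` of `g t`.
    refine (countable_setOfPred_isolated_right_within (s := A)).mono fun t ht => ?_
    refine ⟨ht, ?_⟩
    rw [inter_comm, nhdsWithin_inter', inf_principal_eq_bot]
    obtain ⟨r, htr, hr⟩ := (nhdsGT_basis t).eventually_iff.1 <|
      Metric.tendsto_nhds.1 (hf t ht.1) (ε / 2) (half_pos hε)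
    filter_upwards [Ioo_mem_nhdsGT htr] with u hu huA
    have hgu : dist (g u) (g t) ≤ ε / 2 :=
      le_of_tendsto ((hf u huA.1).dist tendsto_const_nhds) <|
        mem_of_superset (Ioo_mem_nhdsGT hu.2) fun v hv => (hr ⟨hu.1.trans hv.1, hv.2⟩).le
    linarith [huA.2, hr hu, dist_triangle_right (f u) (g u) (g t)]
  refine (countable_iUnion fun n : ℕ => hA (1 / (n + 1)) Nat.one_div_pos_of_nat).mono ?_
  rintro t ⟨hts, hne⟩
  obtain ⟨n, hn⟩ := exists_nat_one_div_lt (dist_pos.2 hne)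
  exact mem_iUnion.2 ⟨n, hts, hn.le⟩

theorem aemeasurable_restrict_of_tendsto_nhdsGT [MeasurableSpace E] [BorelSpace E]
    {μ : Measure ℝ} [NullSingletonClass μ] (hs : MeasurableSet s)
    (hf : ∀ t ∈ s, ∃ l, Tendsto f (𝓝[>] t) (𝓝 l)) :
    AEMeasurable f (μ.restrict s) := by
  have hlim : ∀ t ∈ s, Tendsto f (𝓝[>] t) (𝓝 (f.rightLim t)) := fun t ht => by
    obtain ⟨l, hl⟩ := hf t ht
    rwa [rightLim_eq_of_tendsto hl]
  set step : ℕ → ℝ → ℝ := fun n t => ((⌊((n : ℝ) + 1) * t⌋ : ℝ) + 1) / ((n : ℝ) + 1)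
  have hstep : ∀ t, Tendsto (fun n => step n t) atTop (𝓝[>] t) := by
    intro t
    have hbounds : ∀ n : ℕ, t < step n t ∧ step n t ≤ t + 1 / ((n : ℝ) + 1) := fun n => by
      have hpos : (0 : ℝ) < n + 1 := n.cast_add_one_pos
      constructor
      · rw [lt_div_iff₀ hpos, mul_comm]
        exact Int.lt_floor_add_one _
      · rw [div_le_iff₀ hpos, add_mul t, one_div_mul_cancel hpos.ne', mul_comm t]
        gcongr
        exact Int.floor_le _
    refine tendsto_nhdsWithin_iff.2 ⟨?_, Eventually.of_forall fun n => (hbounds n).1⟩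
    refine tendsto_of_tendsto_of_tendsto_of_le_of_le tendsto_const_nhds ?_
      (fun n => (hbounds n).1.le) fun n => (hbounds n).2
    simpa using tendsto_const_nhds.add (tendsto_one_div_add_atTop_nhds_zero_nat (𝕜 := ℝ))
  have hmeas : ∀ n, AEMeasurable (fun t => f (step n t)) (μ.restrict s) := fun n =>
    ((measurable_of_countable fun k : ℤ => f ((k + 1) / ((n : ℝ) + 1))).comp
      (Int.measurable_floor.comp (measurable_id.const_mul _))).aemeasurable
  refine aemeasurable_of_tendsto_metrizable_ae' hmeas ?_
  filter_upwards [ae_restrict_mem hs,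
    ae_restrict_of_ae ((countable_setOf_ne_rightLim_s19 hlim).ae_notMem μ)] with t hts hgood
  rw [show f t = f.rightLim t from not_not.1 fun h => hgood ⟨hts, h⟩]
  exact (hlim t hts).comp (hstep t)

end RightLimits

theorem exists_tendsto_nhdsGT_of_regulated {E : Type*} [TopologicalSpace E] {x : ℝ → E} {σ : ℝ}
    (h0 : RegulatedOnIic0 (history x 0)) (hreg : RegulatedOnIcc x 0 σ) :
    ∀ t < σ, ∃ l, Tendsto x (𝓝[>] t) (𝓝 l) := by
  intro t htσ
  rcases lt_or_ge t 0 with ht | ht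
  · have hx : history x 0 = x := funext fun θ => congrArg x (zero_add θ)
    simpa [hx, nhdsWithin_Ioo_eq_nhdsGT ht] using h0.2 t ht
  · simpa [nhdsWithin_Ioc_eq_nhdsGT htσ] using hreg.2 t ⟨ht, htσ⟩

section ShiftedIntegral

variable {E : Type*} [NormedAddCommGroup E]

theorem setIntegral_Iic_comp_add_right [NormedSpace ℝ E] (F : ℝ → E) (c h : ℝ) :
    ∫ θ in Iic c, F (θ + h) = ∫ θ in Iic (c + h), F θ := by
  have := (measurePreserving_add_right volume h).setIntegral_preimage_emb
    (measurableEmbedding_addRight h) F (Iic (c + h))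
  rwa [preimage_add_const_Iic, add_sub_cancel_right] at this

theorem MeasureTheory.IntegrableOn.comp_sub_right_Iic {T : ℝ → E} {c : ℝ}
    (hT : IntegrableOn T (Iic c)) (h : ℝ) : IntegrableOn (fun θ => T (θ - h)) (Iic (c + h)) := by
  rw [← preimage_sub_const_Iic] at *
  exact ((measurePreserving_sub_right volume h).integrableOn_comp_preimage
    (measurableEmbedding_subRight h)).2 hT

end ShiftedIntegral

theorem integrableOn_Iic_of_abs_mul_exp_neg_le {T : ℝ → ℝ} {C : ℝ}
    (hT : AEStronglyMeasurable T (volume.restrict (Iic 0)))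
    (hC : ∀ θ ≤ 0, |T θ| * Real.exp (-θ) ≤ C) : IntegrableOn T (Iic 0) := by
  refine ((integrableOn_exp_Iic 0).const_mul C).mono' hT ?_
  filter_upwards [ae_restrict_mem measurableSet_Iic] with θ hθ
  rw [Real.norm_eq_abs, ← div_le_iff₀ (Real.exp_pos θ), div_eq_mul_inv, ← Real.exp_neg]
  exact hC θ hθ

theorem abs_setIntegral_mul_comp_add_sub_le {T ψ : ℝ → ℝ} {S h : ℝ} (hh : 0 ≤ h)
    (hT : IntegrableOn T (Iic 0)) (hTS : ∀ θ ≤ 0, |T θ| ≤ S)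
    (hψm : AEStronglyMeasurable ψ (volume.restrict (Iic h))) (hψ : ∀ θ, |ψ θ| ≤ 1) :
    |(∫ θ in Iic 0, T θ * ψ (θ + h)) - ∫ θ in Iic 0, T θ * ψ θ| ≤
      (∫ θ in Iic 0, |T (θ - h) - T θ|) + S * h := by
  have hIic : Iic 0 ⊆ Iic h := Iic_subset_Iic.2 hh
  have hTh : IntegrableOn (fun θ => T (θ - h)) (Iic h) := by
    simpa using hT.comp_sub_right_Iic h
  have hG : IntegrableOn (fun θ => T (θ - h) * ψ θ) (Iic h) := hTh.mul_bdd hψm (ae_of_all _ hψ)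
  have hTψ : IntegrableOn (fun θ => T θ * ψ θ) (Iic 0) :=
    hT.mul_bdd (hψm.mono_measure (Measure.restrict_mono hIic le_rfl)) (ae_of_all _ hψ)
  have hsplit : (∫ θ in Iic 0, T θ * ψ (θ + h)) - ∫ θ in Iic 0, T θ * ψ θ =
      (∫ θ in 0..h, T (θ - h) * ψ θ) + ∫ θ in Iic 0, (T (θ - h) - T θ) * ψ θ := by
    have hshift : ∫ θ in Iic 0, T θ * ψ (θ + h) = ∫ θ in Iic h, T (θ - h) * ψ θ := by
      simpa using setIntegral_Iic_comp_add_right (fun θ => T (θ - h) * ψ θ) 0 h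
    rw [hshift, ← intervalIntegral.integral_Iic_sub_Iic (hG.mono_set hIic) hG]
    simp only [sub_mul]
    rw [integral_sub (hG.mono_set hIic) hTψ]
    ring
  have hS : 0 ≤ S := (abs_nonneg _).trans (hTS 0 le_rfl)
  have hnear : |∫ θ in 0..h, T (θ - h) * ψ θ| ≤ S * h := by
    have := intervalIntegral.norm_integral_le_of_norm_le_const (a := 0) (b := h) (C := S)
      (f := fun θ => T (θ - h) * ψ θ) fun θ hθ => by
        rw [uIoc_of_le hh] at hθ
        rw [norm_mul, ← mul_one S]
        exact mul_le_mul (hTS _ (by linarith [hθ.2])) (hψ θ) (norm_nonneg _) hS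
    rwa [sub_zero, abs_of_nonneg hh] at this
  have hfar : |∫ θ in Iic 0, (T (θ - h) - T θ) * ψ θ| ≤ ∫ θ in Iic 0, |T (θ - h) - T θ| := by
    have hdiff : IntegrableOn (fun θ => |T (θ - h) - T θ|) (Iic 0) :=
      ((hTh.mono_set hIic).sub hT).abs
    refine norm_integral_le_of_norm_le (f := fun θ => (T (θ - h) - T θ) * ψ θ) hdiff
      (ae_of_all _ fun θ => ?_)
    rw [norm_mul, Real.norm_eq_abs, Real.norm_eq_abs]
    exact mul_le_of_le_one_right (abs_nonneg _) (hψ θ)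
  rw [hsplit]
  linarith [abs_add_le (∫ θ in 0..h, T (θ - h) * ψ θ) (∫ θ in Iic 0, (T (θ - h) - T θ) * ψ θ)]

theorem fT_history_lipschitz_general
    (Tf : ℝ → ℝ)
    (hTcont : ContinuousOn Tf (Set.Iic 0))
    (hTbdd : ∃ C : ℝ, ∀ θ ≤ (0:ℝ), |Tf θ| ≤ C)
    (hTa : ∃ C : ℝ, ∀ θ ≤ (0:ℝ), |Tf θ| * Real.exp (-θ) ≤ C)
    (D : ℝ)
    (hTc : ∀ t1, 0 ≤ t1 → ∀ t2, 0 ≤ t2 →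
      (∫ θ in Set.Iic (0:ℝ), |Tf (θ - t2) - Tf (θ - t1)|) ≤ D * |t2 - t1|)
    (σ : ℝ)
    (x : ℝ → ℝ) (hx0 : BGqMem (history x 0)) (hxreg : RegulatedOnIcc x 0 σ) :
    ∀ s, 0 ≤ s → ∀ a b : ℝ, 0 ≤ b → b ≤ a → a ≤ σ →
      |fT Tf s (history x a) - fT Tf s (history x b)| ≤
        (2 * D + sSup ((fun θ => |Tf θ|) '' Set.Iic 0)) * |a - b| := by
  intro s _ a b _ hba haσ
  have hh : 0 ≤ a - b := sub_nonneg.2 hba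
  set S := sSup ((fun θ => |Tf θ|) '' Iic 0)
  have hTS : ∀ θ ≤ (0:ℝ), |Tf θ| ≤ S := by
    obtain ⟨C, hC⟩ := hTbdd
    exact fun θ hθ => le_csSup ⟨C, forall_mem_image.2 hC⟩ (mem_image_of_mem _ hθ)
  obtain ⟨C, hC⟩ := hTa
  have hT : IntegrableOn Tf (Iic 0) :=
    integrableOn_Iic_of_abs_mul_exp_neg_le (hTcont.aestronglyMeasurable measurableSet_Iic) hC
  have hx : AEMeasurable x (volume.restrict (Iic a)) := by
    have := aemeasurable_restrict_of_tendsto_nhdsGT (μ := volume) measurableSet_Iio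
      (exists_tendsto_nhdsGT_of_regulated hx0.1 hxreg)
    rw [Measure.restrict_congr_set Iio_ae_eq_Iic] at this
    exact this.mono_measure (Measure.restrict_mono (Iic_subset_Iic.2 haσ) le_rfl)
  have hψ : AEStronglyMeasurable (fun θ => Real.tanh (x (b + θ)))
      (volume.restrict (Iic (a - b))) := by
    have := (Real.continuous_tanh.measurable.comp_aemeasurable hx).aestronglyMeasurable
      |>.comp_measurePreserving
        ((measurePreserving_add_left volume b).restrict_preimage measurableSet_Iic)
    rwa [preimage_const_add_Iic] at this
  have key := abs_setIntegral_mul_comp_add_sub_le hh hT hTS hψ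
    fun θ => (Real.abs_tanh_lt_one _).le
  simp only [show ∀ θ, b + (θ + (a - b)) = a + θ from fun θ => by ring] at key
  have hD := hTc 0 le_rfl (a - b) hh
  simp only [sub_zero, abs_of_nonneg hh] at hD
  have hD0 : 0 ≤ D * (a - b) := (integral_nonneg fun _ => abs_nonneg _).trans hD
  simp only [fT, history]
  rw [← mul_sub, abs_mul, abs_of_nonneg (sq_nonneg _), abs_of_nonneg hh]
  calc _ ≤ 1 * (D * (a - b) + S * (a - b)) :=
        mul_le_mul (Real.cos_sq_le_one s) (by linarith) (abs_nonneg _) zero_le_one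
    _ ≤ (2 * D + S) * (a - b) := by linarith

/-- for a function `x` with `x₀ ∈ BG_q` that is regulated on
`[0, σ]`, the functional `f` is Lipschitz along shifted histories:
`|f(s, x_a) - f(s, x_b)| ≤ (2D + sup_{θ ≤ 0} |T θ|) |a - b|` for
`0 ≤ b ≤ a ≤ σ` and `s ≥ 0`. -/
theorem fT_history_lipschitz
    (Tf : ℝ → ℝ)
    (hTcont : ContinuousOn Tf (Set.Iic 0))
    (hTbdd : ∃ C : ℝ, ∀ θ ≤ (0:ℝ), |Tf θ| ≤ C)
    (hTa : ∃ C : ℝ, ∀ θ ≤ (0:ℝ), |Tf θ| * Real.exp (-θ) ≤ C)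
    (hTb : MeasureTheory.IntegrableOn (fun θ => |Tf θ| * Real.exp θ) (Set.Iic 0))
    (D : ℝ) (hD : 0 < D)
    (hTc : ∀ t1, 0 ≤ t1 → ∀ t2, 0 ≤ t2 →
      (∫ θ in Set.Iic (0:ℝ), |Tf (θ - t2) - Tf (θ - t1)|) ≤ D * |t2 - t1|)
    (σ : ℝ) (hσ : 0 < σ)
    (x : ℝ → ℝ) (hx0 : BGqMem (history x 0)) (hxreg : RegulatedOnIcc x 0 σ) :
    ∀ s, 0 ≤ s → ∀ a b : ℝ, 0 ≤ b → b ≤ a → a ≤ σ →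
      |fT Tf s (history x a) - fT Tf s (history x b)| ≤
        (2 * D + sSup ((fun θ => |Tf θ|) '' Set.Iic 0)) * |a - b| :=
  fT_history_lipschitz_general Tf hTcont hTbdd hTa D hTc σ x hx0 hxreg
end
end
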